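/- arXiv:2304.05742 — 2 statements merged into one kernel-verified Lean document; each statement's English description precedes it below -/
import Mathlib

section
/- Let S be a nondegenerate even lattice and K ⊂ disc S an isotropic subgroup. Then L := {x ∈ S ⊗ ℚ : x mod S ∈ K} is an even integral lattice containing S with L/S ≅ K, and disc L ≅ K^⊥/K as finite quadratic forms. -/
open Matrix

/-- The group `ℚ/2ℤ`. -/
abbrev QMod2 : Type := ℚ ⧸ AddSubgroup.zmultiples (2 : ℚ)
/-- The group `ℚ/ℤ`. -/
abbrev QMod1 : Type := ℚ ⧸ AddSubgroup.zmultiples (1 : ℚ)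

/-- The natural isomorphism `2 : ℚ/ℤ → ℚ/2ℤ`, `r ↦ 2r`. -/
def twoHom : QMod1 →+ QMod2 :=
  QuotientAddGroup.map _ _ (AddMonoidHom.mk' (fun r : ℚ => 2 * r) (fun a b => by ring))
    (by
      intro x hx
      obtain ⟨k, hk⟩ := AddSubgroup.mem_zmultiples_iff.mp hx
      refine AddSubgroup.mem_comap.mpr (AddSubgroup.mem_zmultiples_iff.mpr ⟨k, ?_⟩)
      simp only [AddMonoidHom.mk'_apply]
      rw [← hk]
      simp [zsmul_eq_mul]
      ring)

variable {ι : Type} [Fintype ι]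

/-- The `ℚ`-bilinear extension of the bilinear form with integral Gram matrix `M`. -/
def Bq (M : Matrix ι ι ℤ) (x y : ι → ℚ) : ℚ := x ⬝ᵥ (M.map (Int.cast : ℤ → ℚ)).mulVec y

/-- A rational number is integral. -/
def IsInt (r : ℚ) : Prop := ∃ z : ℤ, r = (z : ℚ)

/-- The lattice `L` itself, i.e. the integral vectors, as a subgroup of `L ⊗ ℚ = ι → ℚ`. -/
def intSub (ι : Type) [Fintype ι] : AddSubgroup (ι → ℚ) where
  carrier := {x | ∀ i, IsInt (x i)}
  add_mem' := by
    rintro a b ha hb i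
    obtain ⟨z, hz⟩ := ha i; obtain ⟨w, hw⟩ := hb i
    exact ⟨z + w, by simp [Pi.add_apply, hz, hw]⟩
  zero_mem' := fun i => ⟨0, by simp⟩
  neg_mem' := by
    rintro a ha i
    obtain ⟨z, hz⟩ := ha i
    exact ⟨-z, by simp [Pi.neg_apply, hz]⟩

/-- The dual lattice of a subgroup `A ⊂ L ⊗ ℚ` w.r.t. the form `M`:
all vectors pairing integrally with all of `A`. -/
def dualOf (M : Matrix ι ι ℤ) (A : AddSubgroup (ι → ℚ)) : AddSubgroup (ι → ℚ) where
  carrier := {x | ∀ y ∈ A, IsInt (Bq M x y)}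
  add_mem' := by
    rintro a b ha hb y hy
    obtain ⟨z, hz⟩ := ha y hy; obtain ⟨w, hw⟩ := hb y hy
    refine ⟨z + w, ?_⟩
    have h : Bq M (a + b) y = Bq M a y + Bq M b y := by
      simp [Bq, add_dotProduct]
    rw [h, hz, hw]; push_cast; ring
  zero_mem' := by
    intro y hy
    exact ⟨0, by simp [Bq]⟩
  neg_mem' := by
    rintro a ha y hy
    obtain ⟨z, hz⟩ := ha y hy
    refine ⟨-z, ?_⟩
    have h : Bq M (-a) y = -Bq M a y := by simp [Bq, neg_dotProduct]
    rw [h, hz]; push_cast; ring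

/-- The dual lattice `L^∨`. -/
abbrev dualSub (M : Matrix ι ι ℤ) : AddSubgroup (ι → ℚ) := dualOf M (intSub ι)

/-- The discriminant group `disc L = L^∨/L`. -/
abbrev discQuot (M : Matrix ι ι ℤ) : Type :=
  dualSub M ⧸ (intSub ι).addSubgroupOf (dualSub M)

lemma Bq_comm {ι : Type} [Fintype ι] (M : Matrix ι ι ℤ) (hM : M.IsSymm)
    (x y : ι → ℚ) : Bq M x y = Bq M y x := by
  have hA : ∀ i j, (M.map (Int.cast : ℤ → ℚ)) i j = (M.map (Int.cast : ℤ → ℚ)) j i := by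
    intro i j
    simp only [Matrix.map_apply]
    exact_mod_cast congrArg (Int.cast : ℤ → ℚ) (hM.apply j i)
  simp only [Bq, dotProduct, mulVec, Finset.mul_sum]
  rw [Finset.sum_comm]
  refine Finset.sum_congr rfl fun i _ => Finset.sum_congr rfl fun j _ => ?_
  rw [hA i j]; ring

/-- The finite-index extension `L ⊃ S` determined by a subgroup
`K ⊂ disc S`: all `x ∈ S^∨` whose class mod `S` lies in `K`. -/
def extLat {ι : Type} [Fintype ι] (M : Matrix ι ι ℤ)
    (K : AddSubgroup (discQuot M)) : AddSubgroup (ι → ℚ) where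
  carrier := {x | ∃ hx : x ∈ dualSub M,
    (QuotientAddGroup.mk (⟨x, hx⟩ : dualSub M) : discQuot M) ∈ K}
  add_mem' := by
    rintro a b ⟨ha, hKa⟩ ⟨hb, hKb⟩
    refine ⟨add_mem ha hb, ?_⟩
    have h : (⟨a + b, add_mem ha hb⟩ : dualSub M) = ⟨a, ha⟩ + ⟨b, hb⟩ := rfl
    rw [h, QuotientAddGroup.mk_add]
    exact add_mem hKa hKb
  zero_mem' := by
    refine ⟨zero_mem _, ?_⟩
    have h : (⟨(0 : ι → ℚ), zero_mem _⟩ : dualSub M) = 0 := rfl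
    rw [h, QuotientAddGroup.mk_zero]
    exact zero_mem K
  neg_mem' := by
    rintro a ⟨ha, hKa⟩
    refine ⟨neg_mem ha, ?_⟩
    have h : (⟨-a, neg_mem ha⟩ : dualSub M) = -⟨a, ha⟩ := rfl
    rw [h, QuotientAddGroup.mk_neg]
    exact neg_mem hKa

/-- The orthogonal complement `K^⊥` of a subgroup `K ⊂ disc S` with respect to
the discriminant bilinear form (expressed via lifts). -/
def KperpSub {ι : Type} [Fintype ι] (M : Matrix ι ι ℤ) (hM : M.IsSymm)
    (K : AddSubgroup (discQuot M)) : AddSubgroup (discQuot M) where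
  carrier := {v | ∀ x y : dualSub M, (QuotientAddGroup.mk x : discQuot M) = v →
    (QuotientAddGroup.mk y : discQuot M) ∈ K →
    (QuotientAddGroup.mk (Bq M (x : ι → ℚ) (y : ι → ℚ)) : QMod1) = 0}
  add_mem' := by
    rintro u v hu hv x y hx hy
    obtain ⟨x₁, hx₁⟩ := QuotientAddGroup.mk_surjective (s := (intSub ι).addSubgroupOf (dualSub M)) u
    have hx₂ : (QuotientAddGroup.mk (x - x₁) : discQuot M) = v := by
      rw [QuotientAddGroup.mk_sub, hx, hx₁]; abel
    have h1 := hu x₁ y hx₁ hy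
    have h2 := hv (x - x₁) y hx₂ hy
    have h : Bq M (x : ι → ℚ) y =
        Bq M ((x₁ : dualSub M) : ι → ℚ) y + Bq M (((x - x₁ : dualSub M) : ι → ℚ)) y := by
      have hxx : ((x : ι → ℚ)) = ((x₁ : dualSub M) : ι → ℚ) + ((x - x₁ : dualSub M) : ι → ℚ) := by
        push_cast; abel
      rw [hxx]; simp [Bq, add_dotProduct]
    calc (QuotientAddGroup.mk (Bq M (x : ι → ℚ) y) : QMod1)
        = QuotientAddGroup.mk (Bq M ((x₁ : dualSub M) : ι → ℚ) y)
          + QuotientAddGroup.mk (Bq M (((x - x₁ : dualSub M) : ι → ℚ)) y) := by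
          rw [h, QuotientAddGroup.mk_add]
      _ = 0 := by rw [h1, h2, add_zero]
  zero_mem' := by
    intro x y hx hy
    have hxi : (x : ι → ℚ) ∈ intSub ι := by
      have := (QuotientAddGroup.eq_zero_iff x).mp hx
      exact this
    obtain ⟨hyd, _⟩ : (y : ι → ℚ) ∈ dualSub M ∧ True := ⟨y.2, trivial⟩
    obtain ⟨z, hz⟩ := hyd (x : ι → ℚ) hxi
    rw [Bq_comm M hM]
    rw [hz]
    exact (QuotientAddGroup.eq_zero_iff _).mpr ⟨z, by simp [zsmul_eq_mul]⟩
  neg_mem' := by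
    rintro u hu x y hx hy
    have hx' : (QuotientAddGroup.mk (-x) : discQuot M) = u := by
      rw [QuotientAddGroup.mk_neg, hx, neg_neg]
    have h1 := hu (-x) y hx' hy
    have h : Bq M (x : ι → ℚ) y = -Bq M ((-x : dualSub M) : ι → ℚ) y := by
      push_cast
      simp [Bq, neg_dotProduct]
    rw [h]
    rw [show (QuotientAddGroup.mk (-Bq M ((-x : dualSub M) : ι → ℚ) y) : QMod1)
      = -QuotientAddGroup.mk (Bq M ((-x : dualSub M) : ι → ℚ) y) from QuotientAddGroup.mk_neg _ _]
    rw [h1, neg_zero]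

section Stmt7Aux

variable {ι : Type} [Fintype ι]

lemma isInt_add {a b : ℚ} (ha : IsInt a) (hb : IsInt b) : IsInt (a + b) := by
  obtain ⟨z, rfl⟩ := ha; obtain ⟨w, rfl⟩ := hb; exact ⟨z + w, by push_cast; ring⟩

lemma isInt_mul {a b : ℚ} (ha : IsInt a) (hb : IsInt b) : IsInt (a * b) := by
  obtain ⟨z, rfl⟩ := ha; obtain ⟨w, rfl⟩ := hb; exact ⟨z * w, by push_cast; ring⟩

lemma isInt_sum {α : Type*} {s : Finset α} {f : α → ℚ} (h : ∀ i ∈ s, IsInt (f i)) :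
    IsInt (∑ i ∈ s, f i) :=
  Finset.sum_induction f IsInt (fun _ _ => isInt_add) ⟨0, by simp⟩ h

lemma Bq_apply (M : Matrix ι ι ℤ) (x y : ι → ℚ) :
    Bq M x y = ∑ i, ∑ j, x i * ((M i j : ℚ) * y j) := by
  simp [Bq, dotProduct, Matrix.mulVec, Finset.mul_sum, Matrix.map_apply]

lemma isInt_sub {a b : ℚ} (ha : IsInt a) (hb : IsInt b) : IsInt (a - b) := by
  obtain ⟨z, rfl⟩ := ha; obtain ⟨w, rfl⟩ := hb; exact ⟨z - w, by push_cast; ring⟩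

lemma Bq_add_left {ι : Type} [Fintype ι] (M : Matrix ι ι ℤ) (x y z : ι → ℚ) :
    Bq M (x + y) z = Bq M x z + Bq M y z := by
  simp [Bq_apply, add_mul, Finset.sum_add_distrib]

lemma isInt_Bq (M : Matrix ι ι ℤ) {x y : ι → ℚ}
    (hx : ∀ i, IsInt (x i)) (hy : ∀ i, IsInt (y i)) : IsInt (Bq M x y) := by
  rw [Bq_apply]
  exact isInt_sum fun i _ => isInt_sum fun j _ =>
    isInt_mul (hx i) (isInt_mul ⟨M i j, rfl⟩ (hy j))

lemma Bq_add_right (M : Matrix ι ι ℤ) (x y z : ι → ℚ) :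
    Bq M x (y + z) = Bq M x y + Bq M x z := by
  simp [Bq_apply, mul_add, Finset.sum_add_distrib]

lemma Bq_sub_right (M : Matrix ι ι ℤ) (x y z : ι → ℚ) :
    Bq M x (y - z) = Bq M x y - Bq M x z := by
  simp [Bq_apply, mul_sub, Finset.sum_sub_distrib]

lemma Bq_sub_left (M : Matrix ι ι ℤ) (x y z : ι → ℚ) :
    Bq M (x - y) z = Bq M x z - Bq M y z := by
  simp [Bq_apply, sub_mul, Finset.sum_sub_distrib]

lemma QMod1_eq_zero_iff {r : ℚ} : (QuotientAddGroup.mk r : QMod1) = 0 ↔ IsInt r := by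
  rw [QuotientAddGroup.eq_zero_iff, AddSubgroup.mem_zmultiples_iff]
  constructor
  · rintro ⟨k, hk⟩; exact ⟨k, by rw [← hk]; simp [zsmul_eq_mul]⟩
  · rintro ⟨z, rfl⟩; exact ⟨z, by simp [zsmul_eq_mul]⟩

variable (M : Matrix ι ι ℤ)

lemma intSub_le_dualSub : intSub ι ≤ dualSub M :=
  fun _ hx _ hy => isInt_Bq M hx hy

lemma intSub_le_extLat' (K : AddSubgroup (discQuot M)) : intSub ι ≤ extLat M K := by
  intro x hx
  refine ⟨intSub_le_dualSub M hx, ?_⟩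
  have h0 : (QuotientAddGroup.mk (⟨x, intSub_le_dualSub M hx⟩ : dualSub M) : discQuot M) = 0 :=
    (QuotientAddGroup.eq_zero_iff _).mpr hx
  rw [h0]; exact zero_mem K

lemma extLat_mem_dualSub {K : AddSubgroup (discQuot M)} {x : ι → ℚ}
    (hx : x ∈ extLat M K) : x ∈ dualSub M := hx.choose

lemma extLat_class_mem {K : AddSubgroup (discQuot M)} {x : ι → ℚ} (hx : x ∈ extLat M K)
    (hd : x ∈ dualSub M) :
    (QuotientAddGroup.mk (⟨x, hd⟩ : dualSub M) : discQuot M) ∈ K := hx.choose_spec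

lemma mem_extLat_of_class {K : AddSubgroup (discQuot M)} (y : dualSub M)
    (hy : (QuotientAddGroup.mk y : discQuot M) ∈ K) : (y : ι → ℚ) ∈ extLat M K :=
  ⟨y.2, by rwa [show (⟨(y : ι → ℚ), y.2⟩ : dualSub M) = y from rfl]⟩

end Stmt7Aux
/-- let `S` be a nondegenerate even lattice (Gram matrix `M`) and
`K ⊂ disc S` an isotropic subgroup.  Then `L := {x ∈ S ⊗ ℚ : x mod S ∈ K}` is
an even integral lattice containing `S` with `L/S ≅ K`, and
`disc L ≅ K^⊥/K` as finite quadratic forms. -/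
theorem stmt7 {ι : Type} [Fintype ι] [DecidableEq ι]
    (M : Matrix ι ι ℤ) (hM : M.IsSymm) (hdet : M.det ≠ 0)
    (heven : ∀ x : ι → ℤ, 2 ∣ x ⬝ᵥ M.mulVec x)
    (K : AddSubgroup (discQuot M))
    (hiso : ∀ x : dualSub M, (QuotientAddGroup.mk x : discQuot M) ∈ K →
      ∃ z : ℤ, Bq M (x : ι → ℚ) (x : ι → ℚ) = 2 * z) :
    intSub ι ≤ extLat M K ∧
    (∀ x ∈ extLat M K, ∀ y ∈ extLat M K, IsInt (Bq M x y)) ∧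
    (∀ x ∈ extLat M K, ∃ z : ℤ, Bq M x x = 2 * z) ∧
    Nonempty ((extLat M K ⧸ ((intSub ι).addSubgroupOf (extLat M K))) ≃+ K) ∧
    ∃ e : (dualOf M (extLat M K) ⧸ (extLat M K).addSubgroupOf (dualOf M (extLat M K))) ≃+
        (KperpSub M hM K ⧸ K.addSubgroupOf (KperpSub M hM K)),
      ∀ (x : dualOf M (extLat M K)) (y : dualSub M)
        (hy : (QuotientAddGroup.mk y : discQuot M) ∈ KperpSub M hM K),
        e (QuotientAddGroup.mk x) = QuotientAddGroup.mk
            (⟨QuotientAddGroup.mk y, hy⟩ : KperpSub M hM K) →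
          (QuotientAddGroup.mk (Bq M (x : ι → ℚ) (x : ι → ℚ)) : QMod2) =
            (QuotientAddGroup.mk (Bq M (y : ι → ℚ) (y : ι → ℚ)) : QMod2) := by
  -- evenness of L
  have heL : ∀ x ∈ extLat M K, ∃ z : ℤ, Bq M x x = 2 * z := fun x hx =>
    hiso ⟨x, extLat_mem_dualSub M hx⟩ (extLat_class_mem M hx _)
  -- integrality of L
  have hint : ∀ x ∈ extLat M K, ∀ y ∈ extLat M K, IsInt (Bq M x y) := by
    intro x hx y hy
    obtain ⟨z1, h1⟩ := heL (x + y) (add_mem hx hy)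
    obtain ⟨z2, h2⟩ := heL x hx
    obtain ⟨z3, h3⟩ := heL y hy
    have hexp : Bq M (x + y) (x + y) = Bq M x x + Bq M y y + 2 * Bq M x y := by
      rw [Bq_add_right, Bq_add_left, Bq_add_left, Bq_comm M hM y x]; ring
    refine ⟨z1 - z2 - z3, ?_⟩
    have h4 : (2 : ℚ) * Bq M x y = 2 * ((z1 - z2 - z3 : ℤ) : ℚ) := by
      push_cast
      rw [hexp] at h1
      linarith
    linarith
  refine ⟨intSub_le_extLat' M K, hint, heL, ?_, ?_⟩
  -- L/S ≅ K
  · classical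
    let f : extLat M K →+ K := AddMonoidHom.mk'
      (fun x => ⟨QuotientAddGroup.mk (⟨x.1, extLat_mem_dualSub M x.2⟩ : dualSub M),
        extLat_class_mem M x.2 _⟩)
      (fun a b => rfl)
    have hker : (intSub ι).addSubgroupOf (extLat M K) ≤ f.ker := by
      intro x hx
      rw [AddMonoidHom.mem_ker]
      apply Subtype.ext
      exact (QuotientAddGroup.eq_zero_iff _).mpr
        (AddSubgroup.mem_addSubgroupOf.mpr (AddSubgroup.mem_addSubgroupOf.mp hx))
    let fbar := QuotientAddGroup.lift _ f hker
    have hinj : Function.Injective fbar := by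
      intro a b
      refine QuotientAddGroup.induction_on a fun u => QuotientAddGroup.induction_on b fun v h => ?_
      rw [QuotientAddGroup.lift_mk, QuotientAddGroup.lift_mk] at h
      have h2 : (QuotientAddGroup.mk (⟨u.1, extLat_mem_dualSub M u.2⟩ : dualSub M) : discQuot M)
          = QuotientAddGroup.mk (⟨v.1, extLat_mem_dualSub M v.2⟩ : dualSub M) :=
        congrArg Subtype.val h
      have h3 := QuotientAddGroup.eq.mp h2
      refine QuotientAddGroup.eq.mpr (AddSubgroup.mem_addSubgroupOf.mpr ?_)
      exact AddSubgroup.mem_addSubgroupOf.mp h3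
    have hsurj : Function.Surjective fbar := by
      intro k
      obtain ⟨y, hy⟩ := QuotientAddGroup.mk_surjective (k.1 : discQuot M)
      have hyL : (y : ι → ℚ) ∈ extLat M K := mem_extLat_of_class M y (hy ▸ k.2)
      refine ⟨QuotientAddGroup.mk ⟨(y : ι → ℚ), hyL⟩, ?_⟩
      rw [QuotientAddGroup.lift_mk]
      apply Subtype.ext
      show (QuotientAddGroup.mk _ : discQuot M) = k.1
      rw [← hy]
    exact ⟨AddEquiv.ofBijective fbar ⟨hinj, hsurj⟩⟩
  -- disc L ≅ K^⊥/K
  · classical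
    have hLd : ∀ x ∈ dualOf M (extLat M K), x ∈ dualSub M := fun x hx y hy =>
      hx y (intSub_le_extLat' M K hy)
    have hKp : ∀ x : dualOf M (extLat M K),
        (QuotientAddGroup.mk (⟨x.1, hLd x.1 x.2⟩ : dualSub M) : discQuot M)
          ∈ KperpSub M hM K := by
      intro x x' y' hx' hy'
      rw [QMod1_eq_zero_iff]
      set d : dualSub M := -x' + ⟨x.1, hLd x.1 x.2⟩ with hd
      have hdint : (d : ι → ℚ) ∈ intSub ι :=
        AddSubgroup.mem_addSubgroupOf.mp (QuotientAddGroup.eq.mp hx')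
      have hx'eq : (x' : ι → ℚ) = x.1 - (d : ι → ℚ) := by
        have : (d : ι → ℚ) = -(x' : ι → ℚ) + x.1 := rfl
        rw [this]; abel
      have hy'L : (y' : ι → ℚ) ∈ extLat M K := mem_extLat_of_class M y' hy'
      rw [hx'eq, Bq_sub_left]
      exact isInt_sub (x.2 _ hy'L) (by rw [Bq_comm M hM]; exact y'.2 _ hdint)
    let g : dualOf M (extLat M K) →+
        (KperpSub M hM K ⧸ K.addSubgroupOf (KperpSub M hM K)) := AddMonoidHom.mk'
      (fun x => QuotientAddGroup.mk ⟨QuotientAddGroup.mk ⟨x.1, hLd x.1 x.2⟩, hKp x⟩)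
      (fun a b => rfl)
    have hker : (extLat M K).addSubgroupOf (dualOf M (extLat M K)) ≤ g.ker := by
      intro x hx
      rw [AddMonoidHom.mem_ker]
      refine (QuotientAddGroup.eq_zero_iff _).mpr (AddSubgroup.mem_addSubgroupOf.mpr ?_)
      exact extLat_class_mem M (AddSubgroup.mem_addSubgroupOf.mp hx) _
    let gbar := QuotientAddGroup.lift _ g hker
    have hinj : Function.Injective gbar := by
      intro a b
      refine QuotientAddGroup.induction_on a fun u => QuotientAddGroup.induction_on b fun v h => ?_
      rw [QuotientAddGroup.lift_mk, QuotientAddGroup.lift_mk] at h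
      have h2 := AddSubgroup.mem_addSubgroupOf.mp (QuotientAddGroup.eq.mp h)
      have h3 : (QuotientAddGroup.mk ((-(⟨u.1, hLd u.1 u.2⟩ : dualSub M))
          + ⟨v.1, hLd v.1 v.2⟩) : discQuot M) ∈ K := h2
      refine QuotientAddGroup.eq.mpr (AddSubgroup.mem_addSubgroupOf.mpr ?_)
      exact mem_extLat_of_class M _ h3
    have hsurj : Function.Surjective gbar := by
      intro q
      refine QuotientAddGroup.induction_on q fun v => ?_
      obtain ⟨y, hy⟩ := QuotientAddGroup.mk_surjective (v.1 : discQuot M)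
      have hyLd : (y : ι → ℚ) ∈ dualOf M (extLat M K) := by
        intro w hw
        have hwd : w ∈ dualSub M := extLat_mem_dualSub M hw
        have := v.2 y ⟨w, hwd⟩ hy (extLat_class_mem M hw _)
        exact QMod1_eq_zero_iff.mp this
      refine ⟨QuotientAddGroup.mk ⟨(y : ι → ℚ), hyLd⟩, ?_⟩
      rw [QuotientAddGroup.lift_mk]
      apply congrArg QuotientAddGroup.mk
      apply Subtype.ext
      show (QuotientAddGroup.mk _ : discQuot M) = v.1
      rw [← hy]
    refine ⟨AddEquiv.ofBijective gbar ⟨hinj, hsurj⟩, ?_⟩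
    intro x y hy heq
    have heq' : g x = QuotientAddGroup.mk (⟨QuotientAddGroup.mk y, hy⟩ : KperpSub M hM K) := by
      rw [← heq]
      show gbar (QuotientAddGroup.mk x) = g x
      rw [QuotientAddGroup.lift_mk]
    have h2 := AddSubgroup.mem_addSubgroupOf.mp (QuotientAddGroup.eq.mp heq')
    set d : dualSub M := -(⟨x.1, hLd x.1 x.2⟩ : dualSub M) + y with hdd
    have hdK : (QuotientAddGroup.mk d : discQuot M) ∈ K := h2
    have hdL : (d : ι → ℚ) ∈ extLat M K := mem_extLat_of_class M d hdK
    have hxeq : (x : ι → ℚ) = (y : ι → ℚ) - (d : ι → ℚ) := by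
      have : (d : ι → ℚ) = -(x : ι → ℚ) + (y : ι → ℚ) := rfl
      rw [this]; abel
    obtain ⟨w, hw⟩ : IsInt (Bq M (y : ι → ℚ) (d : ι → ℚ)) := by
      have := hy y ⟨(d : ι → ℚ), d.2⟩ rfl hdK
      exact QMod1_eq_zero_iff.mp this
    obtain ⟨z, hz⟩ := hiso d hdK
    refine QuotientAddGroup.eq.mpr (AddSubgroup.mem_zmultiples_iff.mpr ⟨w - z, ?_⟩)
    have hexp : Bq M (x : ι → ℚ) (x : ι → ℚ) = Bq M (y : ι → ℚ) (y : ι → ℚ)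
        - 2 * Bq M (y : ι → ℚ) (d : ι → ℚ) + Bq M (d : ι → ℚ) (d : ι → ℚ) := by
      rw [hxeq, Bq_sub_left, Bq_sub_right, Bq_sub_right,
        Bq_comm M hM (d : ι → ℚ) (y : ι → ℚ)]
      ring
    rw [zsmul_eq_mul, hexp, hw, hz]
    push_cast
    ring
end

section
/- Let T be a nondegenerate finite quadratic form and a ∈ T an element with p^k a = 0 and a² = 2u/p^k mod 2ℤ where gcd(u,p) = 1. Then the map t_a : x ↦ x - (2(x·a)/a²)·a, where 2(x·a)/a² is computed as the integer 2(x·a)·(p^k)/(2u) interpreted via an inverse of u mod p^k, is a well-defined automorphism of T preserving the quadratic form, and t_a is an involution. -/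
/-!
The coefficient `c` with `u c / p^k ≡ x·a` is only determined modulo `p^k`, but `p^k a = 0`
makes `c • a` well defined and additive in `x`: this is an endomorphism `f` of `T`.
Polarization gives `a·a = 2u/p^k`, so `f a = 2a`, hence `f ∘ f = 2f` and `(1 - f)² = 1`.
Finally `q(x - c a) = q x + c² q(a) - 2c (x·a) = q x + 2c²u/p^k - 2c²u/p^k`.
-/

open Matrix

open QuotientAddGroup AddSubgroup

lemma twoHom_mk (r : ℚ) : twoHom (r : QMod1) = ((2 * r : ℚ) : QMod2) :=
  map_mk _ _ _ _ r

lemma twoHom_injective : Function.Injective twoHom := by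
  refine (injective_iff_map_eq_zero twoHom).mpr fun z hz => ?_
  obtain ⟨r, rfl⟩ := mk_surjective z
  rw [twoHom_mk, eq_zero_iff, mem_zmultiples_iff] at hz
  obtain ⟨j, hj⟩ := hz
  rw [eq_zero_iff, mem_zmultiples_iff]
  exact ⟨j, by simp only [zsmul_eq_mul] at hj ⊢; linarith⟩

namespace QMod1

lemma mem_zmultiples_mk_div {u P : ℤ} (hP : P ≠ 0) (hu : IsCoprime u P) {z : QMod1}
    (hz : P • z = 0) : z ∈ zmultiples (((u : ℚ) / P : ℚ) : QMod1) := by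
  obtain ⟨r, rfl⟩ := mk_surjective z
  rw [← mk_zsmul, eq_zero_iff, mem_zmultiples_iff] at hz
  obtain ⟨j, hj⟩ := hz
  obtain ⟨v, w, hvw⟩ := hu
  refine mem_zmultiples_iff.mpr ⟨j * v, ?_⟩
  -- `v` inverts `u` modulo `P`, so `j v • (u / P) = j / P - j w ≡ r`.
  have hr : (j * v : ℤ) • ((u : ℚ) / P) = r + (-(j * w) : ℤ) • (1 : ℚ) := by
    have hPq : (P : ℚ) ≠ 0 := by exact_mod_cast hP
    have hvwq : (v : ℚ) * u + w * P = 1 := by exact_mod_cast hvw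
    simp only [zsmul_eq_mul, mul_one] at hj ⊢
    push_cast
    field_simp
    linear_combination (j : ℚ) * hvwq + hj
  rw [← mk_zsmul, hr, mk_add, (eq_zero_iff _).mpr (zsmul_mem_zmultiples _ _), add_zero]

lemma dvd_of_zsmul_mk_div_eq_zero {u P c : ℤ} (hP : P ≠ 0) (hu : IsCoprime u P)
    (h : c • (((u : ℚ) / P : ℚ) : QMod1) = 0) : P ∣ c := by
  rw [← mk_zsmul, eq_zero_iff, mem_zmultiples_iff] at h
  obtain ⟨j, hj⟩ := h
  have hPq : (P : ℚ) ≠ 0 := by exact_mod_cast hP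
  have hcu : u * c = P * j := by
    simp only [zsmul_eq_mul, mul_one] at hj
    field_simp at hj
    have : (u : ℚ) * c = P * j := by linarith
    exact_mod_cast this
  exact hu.symm.dvd_of_dvd_mul_left ⟨j, hcu⟩

end QMod1

lemma AddMonoidHom.exists_factor_zmultiples {L A : Type*} [AddCommGroup L] [AddCommGroup A]
    (φ : L →+ A) {e : A} {a : L} (hφ : ∀ x, φ x ∈ zmultiples e)
    (he : ∀ c : ℤ, c • e = 0 → c • a = 0) :
    ∃ f : L →+ L, ∀ x (c : ℤ), c • e = φ x → f x = c • a := by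
  choose c hc using fun x => mem_zmultiples_iff.mp (hφ x)
  have hwd : ∀ c₁ c₂ : ℤ, c₁ • e = c₂ • e → c₁ • a = c₂ • a := fun c₁ c₂ h => by
    rw [← sub_eq_zero, ← sub_smul] at h ⊢
    exact he _ h
  refine ⟨AddMonoidHom.mk' (fun x => c x • a) fun x y => ?_, fun x c' h => hwd _ _ ?_⟩
  · rw [← add_zsmul]
    exact hwd _ _ (by rw [add_zsmul, hc, hc, hc, map_add])
  · rw [hc, h]

section QuadraticForm

variable {L : Type*} [AddCommGroup L] {q : L → QMod2} {b : L → L → QMod1}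

lemma map_zsmul_left_of_map_add_left (hbil : ∀ x y z : L, b (x + y) z = b x z + b y z)
    (n : ℤ) (x y : L) : b (n • x) y = n • b x y :=
  map_zsmul (AddMonoidHom.mk' (b · y) (hbil · · y)) n x

lemma twoHom_diag_eq_two_zsmul (hpol : ∀ x y : L, q (x + y) = q x + q y + twoHom (b x y))
    (hhom : ∀ (n : ℤ) (x : L), q (n • x) = n ^ 2 • q x) (x : L) :
    twoHom (b x x) = (2 : ℤ) • q x := by
  have h := hpol x x
  rw [← two_zsmul, hhom, show (2 : ℤ) ^ 2 = 1 + 1 + 2 by norm_num, add_zsmul, add_zsmul,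
    one_zsmul] at h
  exact (add_left_cancel h).symm

lemma quadratic_add_zsmul (hsymm : ∀ x y : L, b x y = b y x)
    (hbil : ∀ x y z : L, b (x + y) z = b x z + b y z)
    (hpol : ∀ x y : L, q (x + y) = q x + q y + twoHom (b x y))
    (hhom : ∀ (n : ℤ) (x : L), q (n • x) = n ^ 2 • q x) (x a : L) (c : ℤ) :
    q (x + c • a) = q x + c ^ 2 • q a + c • twoHom (b x a) := by
  rw [hpol, hhom, hsymm, map_zsmul_left_of_map_add_left hbil, hsymm, map_zsmul]

lemma exists_reflection (hsymm : ∀ x y : L, b x y = b y x)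
    (hbil : ∀ x y z : L, b (x + y) z = b x z + b y z)
    (hpol : ∀ x y : L, q (x + y) = q x + q y + twoHom (b x y))
    (hhom : ∀ (n : ℤ) (x : L), q (n • x) = n ^ 2 • q x)
    {a : L} {e : QMod1} (hmem : ∀ x, b x a ∈ zmultiples e)
    (he : ∀ c : ℤ, c • e = 0 → c • a = 0) (hqa : q a = twoHom e) :
    ∃ t : L ≃+ L, (∀ x, q (t x) = q x) ∧ (∀ x, t (t x) = x) ∧
      ∀ x (c : ℤ), c • e = b x a → t x = x - c • a := by
  obtain ⟨f, hf⟩ : ∃ f : AddMonoid.End L, ∀ x (c : ℤ), c • e = b x a → f x = c • a :=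
    (AddMonoidHom.mk' (b · a) (hbil · · a)).exists_factor_zmultiples hmem he
  have hfa : f a = (2 : ℤ) • a :=
    hf a 2 (twoHom_injective (by rw [twoHom_diag_eq_two_zsmul hpol hhom, hqa, map_zsmul]))
  have hff : f * f = f + f := by
    ext x
    obtain ⟨c, hc⟩ := mem_zmultiples_iff.mp (hmem x)
    change f (f x) = f x + f x
    rw [hf x c hc, map_zsmul, hfa, smul_comm, two_zsmul]
  set τ : AddMonoid.End L := 1 - f
  have hτ : τ * τ = 1 := by
    rw [mul_sub, sub_mul, sub_mul, hff]
    simp only [one_mul, mul_one]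
    abel
  refine ⟨AddMonoidHom.toAddEquiv τ τ hτ hτ, fun x => ?_,
    fun x => congrArg (· x) hτ, fun x c hc => ?_⟩
  · obtain ⟨c, hc⟩ := mem_zmultiples_iff.mp (hmem x)
    change q (x - f x) = q x
    rw [hf x c hc, sub_eq_add_neg, ← neg_zsmul, quadratic_add_zsmul hsymm hbil hpol hhom, ← hc,
      hqa, map_zsmul, smul_smul, add_assoc, ← add_zsmul]
    ring_nf
    rw [zero_zsmul, add_zero]
  · exact congrArg (x - ·) (hf x c hc)

end QuadraticForm

theorem stmt13_general {L : Type} [AddCommGroup L]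
    (q : L → QMod2) (b : L → L → QMod1)
    (hsymm : ∀ x y : L, b x y = b y x)
    (hbil : ∀ x y z : L, b (x + y) z = b x z + b y z)
    (hpol : ∀ x y : L, q (x + y) = q x + q y + twoHom (b x y))
    (hhom : ∀ (n : ℤ) (x : L), q (n • x) = n ^ 2 • q x)
    (p : ℕ) (hp : p.Prime) (k : ℕ) (u : ℤ) (hu : Int.gcd u p = 1)
    (a : L) (hord : ((p : ℤ) ^ k) • a = 0)
    (hqa : q a = (QuotientAddGroup.mk ((2 * u : ℚ) / (p : ℚ) ^ k) : QMod2)) :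
    ∃ t : L ≃+ L,
      (∀ x : L, q (t x) = q x) ∧
      (∀ x : L, t (t x) = x) ∧
      (∀ x : L, ∃ c : ℤ, t x = x - c • a ∧
        (QuotientAddGroup.mk ((u * c : ℚ) / (p : ℚ) ^ k) : QMod1) = b x a) := by
  have hP : (p : ℤ) ^ k ≠ 0 := pow_ne_zero k (Int.natCast_ne_zero.mpr hp.ne_zero)
  have hcop : IsCoprime u ((p : ℤ) ^ k) := (Int.isCoprime_iff_gcd_eq_one.mpr hu).pow_right
  set e : QMod1 := (((u : ℚ) / (p : ℚ) ^ k : ℚ) : QMod1)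
  have he : e = (((u : ℚ) / ((p : ℤ) ^ k : ℤ) : ℚ) : QMod1) := by push_cast; rfl
  have hmem : ∀ x, b x a ∈ zmultiples e := fun x => by
    refine he ▸ QMod1.mem_zmultiples_mk_div hP hcop ?_
    rw [hsymm, ← map_zsmul_left_of_map_add_left hbil, hord]
    simpa using map_zsmul_left_of_map_add_left hbil 0 0 x
  have hker : ∀ c : ℤ, c • e = 0 → c • a = 0 := fun c hc => by
    obtain ⟨d, rfl⟩ := QMod1.dvd_of_zsmul_mk_div_eq_zero hP hcop (he ▸ hc)
    rw [mul_comm, mul_zsmul, hord, zsmul_zero]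
  obtain ⟨t, hqt, hinv, ht⟩ := exists_reflection hsymm hbil hpol hhom hmem hker
    (by rw [hqa, twoHom_mk, mul_div_assoc])
  refine ⟨t, hqt, hinv, fun x => ?_⟩
  obtain ⟨c, hc⟩ := mem_zmultiples_iff.mp (hmem x)
  refine ⟨c, ht x c hc, ?_⟩
  rw [← hc, ← mk_zsmul, zsmul_eq_mul, mul_comm (u : ℚ), mul_div_assoc]

/-- let `T` be a nondegenerate finite quadratic form (here with
the standard polarization convention) and `a ∈ T` with `p^k • a = 0` and
`a² = 2u/p^k mod 2ℤ`, `gcd(u,p) = 1`.  Then the reflection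
`t_a : x ↦ x - (2(x·a)/a²)·a` — the coefficient `c` being the integer with
`uc/p^k ≡ x·a mod ℤ`, computed via an inverse of `u mod p^k` — is a
well-defined automorphism of `T` preserving the quadratic form, and `t_a` is
an involution. -/
theorem stmt13 {L : Type} [AddCommGroup L] [Fintype L]
    (q : L → QMod2) (b : L → L → QMod1)
    (hsymm : ∀ x y : L, b x y = b y x)
    (hbil : ∀ x y z : L, b (x + y) z = b x z + b y z)
    (hpol : ∀ x y : L, q (x + y) = q x + q y + twoHom (b x y))
    (hhom : ∀ (n : ℤ) (x : L), q (n • x) = n ^ 2 • q x)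
    (hnd : ∀ x : L, (∀ y : L, b x y = 0) → x = 0)
    (p : ℕ) (hp : p.Prime) (k : ℕ) (u : ℤ) (hu : Int.gcd u p = 1)
    (a : L) (hord : ((p : ℤ) ^ k) • a = 0)
    (hqa : q a = (QuotientAddGroup.mk ((2 * u : ℚ) / (p : ℚ) ^ k) : QMod2)) :
    ∃ t : L ≃+ L,
      (∀ x : L, q (t x) = q x) ∧
      (∀ x : L, t (t x) = x) ∧
      (∀ x : L, ∃ c : ℤ, t x = x - c • a ∧
        (QuotientAddGroup.mk ((u * c : ℚ) / (p : ℚ) ^ k) : QMod1) = b x a) :=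
  stmt13_general q b hsymm hbil hpol hhom p hp k u hu a hord hqa
end
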